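/- For every rPCTL* state formula φ and every truth value t ∈ B4 there exists a PCTL*(◊,□) state formula φ_t such that for all DTMCs M and all states s of M: V_M(s, φ) ⪰ t if and only if M, s ⊨ φ_t. -/
import Mathlib


open MeasureTheory
open scoped Classical ENNReal NNReal

/-! ### Discrete-time Markov chains, paths, cylinder sets -/

/-- A discrete-time Markov chain over atomic propositions `AP` with a finite
state set `S`, an initial state, a stochastic transition function with values
in `[0,1]`, and a labeling function. -/
structure DTMC (AP : Type) (S : Type) [Fintype S] where
  init : S
  trans : S → S → ℝ≥0
  trans_le_one : ∀ s s', trans s s' ≤ 1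
  trans_sum_one : ∀ s, ∑ s', trans s s' = 1
  label : S → Set AP

namespace DTMC

variable {AP S : Type} [Fintype S]

/-- Paths of `M` starting in `s`. -/
def Path (M : DTMC AP S) (s : S) : Type :=
  { π : ℕ → S // π 0 = s ∧ ∀ n, 0 < M.trans (π n) (π (n + 1)) }

/-- Paths of `M` (with arbitrary first state). -/
def PathU (M : DTMC AP S) : Type :=
  { π : ℕ → S // ∀ n, 0 < M.trans (π n) (π (n + 1)) }

/-- Forget the start state of a path. -/
def Path.toU {M : DTMC AP S} {s : S} (π : M.Path s) : M.PathU :=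
  ⟨π.1, π.2.2⟩

/-- The suffix `π[n..]` of a path. -/
def PathU.suffix {M : DTMC AP S} (π : M.PathU) (n : ℕ) : M.PathU :=
  ⟨fun i => π.1 (n + i), fun i => π.2 (n + i)⟩

/-- `ρ 0, …, ρ n` is a path prefix of `M` starting in `s`. -/
def IsPrefix (M : DTMC AP S) (s : S) (ρ : ℕ → S) (n : ℕ) : Prop :=
  ρ 0 = s ∧ ∀ i < n, 0 < M.trans (ρ i) (ρ (i + 1))

/-- The cylinder set of the prefix `ρ 0, …, ρ n`: all paths starting in `s`
that extend this prefix. -/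
def Cyl (M : DTMC AP S) (s : S) (ρ : ℕ → S) (n : ℕ) : Set (M.Path s) :=
  { π | ∀ i ≤ n, π.1 i = ρ i }

/-- The σ-algebra on `Paths(M,s)` generated by the cylinder sets. -/
instance instMeasurableSpacePath (M : DTMC AP S) (s : S) : MeasurableSpace (M.Path s) :=
  .generateFrom { A | ∃ ρ n, M.IsPrefix s ρ n ∧ A = M.Cyl s ρ n }

/-- `μ` is a probability measure on `Paths(M,s)` giving each cylinder set the
product of the transition probabilities along its prefix. -/
def IsCylinderMeasure (M : DTMC AP S) (s : S) (μ : Measure (M.Path s)) : Prop :=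
  IsProbabilityMeasure μ ∧
    ∀ ρ n, M.IsPrefix s ρ n →
      μ (M.Cyl s ρ n) = ∏ j ∈ Finset.range n, (M.trans (ρ j) (ρ (j + 1)) : ℝ≥0∞)

/-- Paths staying in `S'` forever. -/
def Safe (M : DTMC AP S) (s : S) (S' : Set S) : Set (M.Path s) :=
  { π | ∀ n, π.1 n ∈ S' }

/-- Paths staying in `S'` from some point on (all but finitely many positions). -/
def CoBuchi (M : DTMC AP S) (s : S) (S' : Set S) : Set (M.Path s) :=
  { π | ∃ m, ∀ n, m ≤ n → π.1 n ∈ S' }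

/-- Paths visiting `S'` infinitely often. -/
def Buchi (M : DTMC AP S) (s : S) (S' : Set S) : Set (M.Path s) :=
  { π | ∀ m, ∃ n, m ≤ n ∧ π.1 n ∈ S' }

/-- Paths visiting `S'` at least once. -/
def Reach (M : DTMC AP S) (s : S) (S' : Set S) : Set (M.Path s) :=
  { π | ∃ n, π.1 n ∈ S' }

end DTMC

/-! ### Truth values -/

/-- Four-bit truth values `b₁b₂b₃b₄`. -/
structure TV where
  b1 : Bool
  b2 : Bool
  b3 : Bool
  b4 : Bool
deriving DecidableEq

namespace TV

/-- The truth value `1111`. -/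
def top : TV := ⟨true, true, true, true⟩

/-- The truth value `0000`. -/
def bot : TV := ⟨false, false, false, false⟩

instance : LE TV := ⟨fun v w => v.b1 ≤ w.b1 ∧ v.b2 ≤ w.b2 ∧ v.b3 ≤ w.b3 ∧ v.b4 ≤ w.b4⟩

instance : LT TV := ⟨fun v w => v ≤ w ∧ ¬w ≤ v⟩

/-- Minimum (bitwise). -/
def inf (v w : TV) : TV := ⟨v.b1 && w.b1, v.b2 && w.b2, v.b3 && w.b3, v.b4 && w.b4⟩

/-- Maximum (bitwise). -/
def sup (v w : TV) : TV := ⟨v.b1 || w.b1, v.b2 || w.b2, v.b3 || w.b3, v.b4 || w.b4⟩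

/-- `v` lies in `B4`, i.e. its bits are monotonically nondecreasing. -/
def InB4 (v : TV) : Prop := v.b1 ≤ v.b2 ∧ v.b2 ≤ v.b3 ∧ v.b3 ≤ v.b4

end TV

/-- The five truth values `1111 ≻ 0111 ≻ 0011 ≻ 0001 ≻ 0000`. -/
inductive B4 : Type
  | t1111 | t0111 | t0011 | t0001 | t0000
deriving DecidableEq

/-- The bit vector of an element of `B4`. -/
def B4.toTV : B4 → TV
  | .t1111 => ⟨true, true, true, true⟩
  | .t0111 => ⟨false, true, true, true⟩
  | .t0011 => ⟨false, false, true, true⟩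
  | .t0001 => ⟨false, false, false, true⟩
  | .t0000 => ⟨false, false, false, false⟩

/-- `v ⪰ t` for a truth value `v` and `t ∈ B4`: if `t` has `k` leading zeros,
then `v ⪰ t` is determined by bit `k+1` of `v`. -/
def TV.ge4 (v : TV) : B4 → Prop
  | .t1111 => v.b1 = true
  | .t0111 => v.b2 = true
  | .t0011 => v.b3 = true
  | .t0001 => v.b4 = true
  | .t0000 => True

/-- The Boolean truth value of a proposition. -/
noncomputable def boolOf (P : Prop) : Bool := @decide P (Classical.propDecidable P)

/-- Comparison operators `∼ ∈ {<, ≤, =, ≥, >}` for probability thresholds. -/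
inductive PCmp : Type
  | lt | le | eq | ge | gt

/-- `PCmp.holds c a b` expresses `a ∼ b`. -/
def PCmp.holds : PCmp → ℝ≥0∞ → ℝ≥0∞ → Prop
  | .lt, a, b => a < b
  | .le, a, b => a ≤ b
  | .eq, a, b => a = b
  | .ge, a, b => b ≤ a
  | .gt, a, b => b < a

/-- Rational probability thresholds `λ ∈ [0,1] ∩ ℚ`. -/
abbrev QProb : Type := Set.Icc (0 : ℚ) 1

/-- The threshold as an extended nonnegative real. -/
noncomputable def QProb.toENNReal (q : QProb) : ℝ≥0∞ := ENNReal.ofReal ((q : ℚ) : ℝ)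

/-! ### PCTL*(◊,□) and rPCTL*: shared syntax and semantics -/

mutual
/-- State formulas of PCTL*(◊,□) (equivalently, of rPCTL*):
`φ ::= p | ¬φ | φ∧φ | φ∨φ | φ→φ | P_{∼λ}[Φ]`. -/
inductive SF (AP : Type) : Type
  | atom : AP → SF AP
  | not : SF AP → SF AP
  | and : SF AP → SF AP → SF AP
  | or : SF AP → SF AP → SF AP
  | imp : SF AP → SF AP → SF AP
  | prob : PCmp → QProb → PFm AP → SF AP

/-- Path formulas of PCTL*(◊,□) (equivalently, of rPCTL*, whose temporal
operators are written with dots): `Φ ::= φ | ¬Φ | Φ∧Φ | Φ∨Φ | Φ→Φ | X Φ | ◊ Φ | □ Φ`. -/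
inductive PFm (AP : Type) : Type
  | state : SF AP → PFm AP
  | not : PFm AP → PFm AP
  | and : PFm AP → PFm AP → PFm AP
  | or : PFm AP → PFm AP → PFm AP
  | imp : PFm AP → PFm AP → PFm AP
  | next : PFm AP → PFm AP
  | ev : PFm AP → PFm AP
  | alw : PFm AP → PFm AP
end

mutual
/-- `φ` contains no implications. -/
def SF.NoImp {AP : Type} : SF AP → Prop
  | .atom _ => True
  | .not φ => φ.NoImp
  | .and φ ψ => φ.NoImp ∧ ψ.NoImp
  | .or φ ψ => φ.NoImp ∧ ψ.NoImp
  | .imp _ _ => False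
  | .prob _ _ Φ => Φ.NoImp

/-- `Φ` contains no implications. -/
def PFm.NoImp {AP : Type} : PFm AP → Prop
  | .state φ => φ.NoImp
  | .not Φ => Φ.NoImp
  | .and Φ Ψ => Φ.NoImp ∧ Ψ.NoImp
  | .or Φ Ψ => Φ.NoImp ∧ Ψ.NoImp
  | .imp _ _ => False
  | .next Φ => Φ.NoImp
  | .ev Φ => Φ.NoImp
  | .alw Φ => Φ.NoImp
end

mutual
/-- The standard PCTL* semantics `M,s ⊨ φ` for state formulas, relative to the
family of cylinder-set measures `μ s`. -/
def SF.Sat {AP S : Type} [Fintype S] (M : DTMC AP S)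
    (μ : ∀ s : S, MeasureTheory.Measure (M.Path s)) : SF AP → S → Prop
  | .atom p, s => p ∈ M.label s
  | .not φ, s => ¬ SF.Sat M μ φ s
  | .and φ ψ, s => SF.Sat M μ φ s ∧ SF.Sat M μ ψ s
  | .or φ ψ, s => SF.Sat M μ φ s ∨ SF.Sat M μ ψ s
  | .imp φ ψ, s => SF.Sat M μ φ s → SF.Sat M μ ψ s
  | .prob c l Φ, s => c.holds (μ s { π | PFm.Sat M μ Φ π.toU }) l.toENNReal

/-- The standard PCTL* (i.e. LTL) semantics `M,π ⊨ Φ` for path formulas. -/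
def PFm.Sat {AP S : Type} [Fintype S] (M : DTMC AP S)
    (μ : ∀ s : S, MeasureTheory.Measure (M.Path s)) : PFm AP → M.PathU → Prop
  | .state φ, π => SF.Sat M μ φ (π.1 0)
  | .not Φ, π => ¬ PFm.Sat M μ Φ π
  | .and Φ Ψ, π => PFm.Sat M μ Φ π ∧ PFm.Sat M μ Ψ π
  | .or Φ Ψ, π => PFm.Sat M μ Φ π ∨ PFm.Sat M μ Ψ π
  | .imp Φ Ψ, π => PFm.Sat M μ Φ π → PFm.Sat M μ Ψ π
  | .next Φ, π => PFm.Sat M μ Φ (π.suffix 1)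
  | .ev Φ, π => ∃ n, PFm.Sat M μ Φ (π.suffix n)
  | .alw Φ, π => ∀ n, PFm.Sat M μ Φ (π.suffix n)
end

/-- The maximum of a set of truth values from `B4` (the least value `0000`
if the set is empty). -/
noncomputable def maxB4 (A : Set B4) : B4 :=
  if B4.t1111 ∈ A then .t1111
  else if B4.t0111 ∈ A then .t0111
  else if B4.t0011 ∈ A then .t0011
  else if B4.t0001 ∈ A then .t0001
  else .t0000

mutual
/-- The rPCTL* evaluation function `V_M` on state formulas, relative to the
family of cylinder-set measures `μ s`. -/
noncomputable def SF.val {AP S : Type} [Fintype S] (M : DTMC AP S)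
    (μ : ∀ s : S, MeasureTheory.Measure (M.Path s)) : SF AP → S → TV
  | .atom p, s => if p ∈ M.label s then TV.top else TV.bot
  | .not φ, s => if SF.val M μ φ s = TV.top then TV.bot else TV.top
  | .and φ ψ, s => (SF.val M μ φ s).inf (SF.val M μ ψ s)
  | .or φ ψ, s => (SF.val M μ φ s).sup (SF.val M μ ψ s)
  | .imp φ ψ, s =>
      if SF.val M μ φ s ≤ SF.val M μ ψ s then TV.top else SF.val M μ ψ s
  | .prob c l Φ, s =>
      (maxB4 { b | c.holds (μ s { π | (PFm.val M μ Φ π.toU).ge4 b }) l.toENNReal }).toTV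

/-- The rPCTL* evaluation function `V_M` on path formulas. -/
noncomputable def PFm.val {AP S : Type} [Fintype S] (M : DTMC AP S)
    (μ : ∀ s : S, MeasureTheory.Measure (M.Path s)) : PFm AP → M.PathU → TV
  | .state φ, π => SF.val M μ φ (π.1 0)
  | .not Φ, π => if PFm.val M μ Φ π = TV.top then TV.bot else TV.top
  | .and Φ Ψ, π => (PFm.val M μ Φ π).inf (PFm.val M μ Ψ π)
  | .or Φ Ψ, π => (PFm.val M μ Φ π).sup (PFm.val M μ Ψ π)
  | .imp Φ Ψ, π =>
      if PFm.val M μ Φ π ≤ PFm.val M μ Ψ π then TV.top else PFm.val M μ Ψ π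
  | .next Φ, π => PFm.val M μ Φ (π.suffix 1)
  | .ev Φ, π =>
      ⟨boolOf (∃ n, (PFm.val M μ Φ (π.suffix n)).b1 = true),
       boolOf (∃ n, (PFm.val M μ Φ (π.suffix n)).b2 = true),
       boolOf (∃ n, (PFm.val M μ Φ (π.suffix n)).b3 = true),
       boolOf (∃ n, (PFm.val M μ Φ (π.suffix n)).b4 = true)⟩
  | .alw Φ, π =>
      ⟨boolOf (∀ n, (PFm.val M μ Φ (π.suffix n)).b1 = true),
       boolOf (∃ m, ∀ n, m ≤ n → (PFm.val M μ Φ (π.suffix n)).b2 = true),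
       boolOf (∀ m, ∃ n, m ≤ n ∧ (PFm.val M μ Φ (π.suffix n)).b3 = true),
       boolOf (∃ n, (PFm.val M μ Φ (π.suffix n)).b4 = true)⟩
end

/-! ### Auxiliary development for the translation -/

section Aux

lemma bool_le_iff' {a b : Bool} : a ≤ b ↔ (a = true → b = true) := by
  cases a <;> cases b <;> simp

lemma boolOf_iff {P : Prop} : boolOf P = true ↔ P := by
  simp [boolOf]

lemma boolOf_le' {P Q : Prop} (h : P → Q) : boolOf P ≤ boolOf Q := by
  rw [bool_le_iff', boolOf_iff, boolOf_iff]; exact h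

namespace TV

lemma le_def' {v w : TV} :
    v ≤ w ↔ (v.b1 ≤ w.b1 ∧ v.b2 ≤ w.b2 ∧ v.b3 ≤ w.b3 ∧ v.b4 ≤ w.b4) := Iff.rfl

lemma ge4_top (t : B4) : TV.top.ge4 t := by cases t <;> simp [TV.ge4, TV.top]

lemma ge4_t0000 (v : TV) : v.ge4 .t0000 := trivial

lemma ge4_inf (v w : TV) (t : B4) : (v.inf w).ge4 t ↔ v.ge4 t ∧ w.ge4 t := by
  cases t <;> simp [TV.ge4, TV.inf]

lemma ge4_sup (v w : TV) (t : B4) : (v.sup w).ge4 t ↔ v.ge4 t ∨ w.ge4 t := by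
  cases t <;> simp [TV.ge4, TV.sup]

lemma le_iff_ge4 {v w : TV} :
    v ≤ w ↔ ((v.ge4 .t1111 → w.ge4 .t1111) ∧ (v.ge4 .t0111 → w.ge4 .t0111) ∧
      (v.ge4 .t0011 → w.ge4 .t0011) ∧ (v.ge4 .t0001 → w.ge4 .t0001)) := by
  rw [le_def']
  simp only [bool_le_iff']
  rfl

lemma eq_top_iff_ge4 {v : TV} (h : v.InB4) : v = TV.top ↔ v.ge4 .t1111 := by
  obtain ⟨a, b, c, d⟩ := v
  revert h
  cases a <;> cases b <;> cases c <;> cases d <;>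
    simp [TV.InB4, TV.ge4, TV.top, TV.mk.injEq]

lemma inf_inB4 {v w : TV} (hv : v.InB4) (hw : w.InB4) : (v.inf w).InB4 := by
  obtain ⟨a, b, c, d⟩ := v; obtain ⟨e, f, g, h⟩ := w
  revert hv hw
  cases a <;> cases b <;> cases c <;> cases d <;> cases e <;> cases f <;> cases g <;> cases h <;>
    simp [TV.InB4, TV.inf, TV.sup]

lemma sup_inB4 {v w : TV} (hv : v.InB4) (hw : w.InB4) : (v.sup w).InB4 := by
  obtain ⟨a, b, c, d⟩ := v; obtain ⟨e, f, g, h⟩ := w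
  revert hv hw
  cases a <;> cases b <;> cases c <;> cases d <;> cases e <;> cases f <;> cases g <;> cases h <;>
    simp [TV.InB4, TV.inf, TV.sup]

lemma top_inB4 : TV.top.InB4 := by simp [TV.InB4, TV.top]
lemma bot_inB4 : TV.bot.InB4 := by simp [TV.InB4, TV.bot]

end TV

lemma B4.toTV_inB4 (b : B4) : b.toTV.InB4 := by cases b <;> simp [TV.InB4, B4.toTV]

/-- maxB4 characterizations. -/
lemma maxB4_ge4_1111 (P : B4 → Prop) :
    ((maxB4 {b | P b}).toTV).ge4 .t1111 ↔ P .t1111 := by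
  unfold maxB4
  by_cases h1 : P .t1111 <;> by_cases h2 : P .t0111 <;> by_cases h3 : P .t0011 <;>
    by_cases h4 : P .t0001 <;>
    simp [h1, h2, h3, h4, Set.mem_setOf_eq, B4.toTV, TV.ge4]

lemma maxB4_ge4_0111 (P : B4 → Prop) :
    ((maxB4 {b | P b}).toTV).ge4 .t0111 ↔ P .t1111 ∨ P .t0111 := by
  unfold maxB4
  by_cases h1 : P .t1111 <;> by_cases h2 : P .t0111 <;> by_cases h3 : P .t0011 <;>
    by_cases h4 : P .t0001 <;>
    simp [h1, h2, h3, h4, Set.mem_setOf_eq, B4.toTV, TV.ge4]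

lemma maxB4_ge4_0011 (P : B4 → Prop) :
    ((maxB4 {b | P b}).toTV).ge4 .t0011 ↔ P .t1111 ∨ P .t0111 ∨ P .t0011 := by
  unfold maxB4
  by_cases h1 : P .t1111 <;> by_cases h2 : P .t0111 <;> by_cases h3 : P .t0011 <;>
    by_cases h4 : P .t0001 <;>
    simp [h1, h2, h3, h4, Set.mem_setOf_eq, B4.toTV, TV.ge4]

lemma maxB4_ge4_0001 (P : B4 → Prop) :
    ((maxB4 {b | P b}).toTV).ge4 .t0001 ↔ P .t1111 ∨ P .t0111 ∨ P .t0011 ∨ P .t0001 := by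
  unfold maxB4
  by_cases h1 : P .t1111 <;> by_cases h2 : P .t0111 <;> by_cases h3 : P .t0011 <;>
    by_cases h4 : P .t0001 <;>
    simp [h1, h2, h3, h4, Set.mem_setOf_eq, B4.toTV, TV.ge4]

lemma DTMC.PathU.suffix_suffix {AP S : Type} [Fintype S] {M : DTMC AP S}
    (π : M.PathU) (m n : ℕ) : (π.suffix m).suffix n = π.suffix (m + n) :=
  Subtype.ext (funext fun i => by simp [DTMC.PathU.suffix, add_assoc])

end Aux

/-! ### The translation -/

mutual
/-- Translation of rPCTL* state formulas. -/
def trS {AP : Type} : SF AP → B4 → SF AP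
  | φ, .t0000 => φ.imp φ
  | .atom p, _ => .atom p
  | .not φ, _ => .not (trS φ .t1111)
  | .and φ ψ, t => .and (trS φ t) (trS ψ t)
  | .or φ ψ, t => .or (trS φ t) (trS ψ t)
  | .imp φ ψ, t =>
      .or (.and ((trS φ .t1111).imp (trS ψ .t1111))
        (.and ((trS φ .t0111).imp (trS ψ .t0111))
          (.and ((trS φ .t0011).imp (trS ψ .t0011))
            ((trS φ .t0001).imp (trS ψ .t0001)))))
        (trS ψ t)
  | .prob c l Φ, .t1111 => .prob c l (trP Φ .t1111)
  | .prob c l Φ, .t0111 => .or (.prob c l (trP Φ .t1111)) (.prob c l (trP Φ .t0111))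
  | .prob c l Φ, .t0011 =>
      .or (.prob c l (trP Φ .t1111)) (.or (.prob c l (trP Φ .t0111)) (.prob c l (trP Φ .t0011)))
  | .prob c l Φ, .t0001 =>
      .or (.prob c l (trP Φ .t1111)) (.or (.prob c l (trP Φ .t0111))
        (.or (.prob c l (trP Φ .t0011)) (.prob c l (trP Φ .t0001))))

/-- Translation of rPCTL* path formulas. -/
def trP {AP : Type} : PFm AP → B4 → PFm AP
  | Φ, .t0000 => Φ.imp Φ
  | .state φ, t => .state (trS φ t)
  | .not Φ, _ => .not (trP Φ .t1111)
  | .and Φ Ψ, t => .and (trP Φ t) (trP Ψ t)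
  | .or Φ Ψ, t => .or (trP Φ t) (trP Ψ t)
  | .imp Φ Ψ, t =>
      .or (.and ((trP Φ .t1111).imp (trP Ψ .t1111))
        (.and ((trP Φ .t0111).imp (trP Ψ .t0111))
          (.and ((trP Φ .t0011).imp (trP Ψ .t0011))
            ((trP Φ .t0001).imp (trP Ψ .t0001)))))
        (trP Ψ t)
  | .next Φ, t => .next (trP Φ t)
  | .ev Φ, t => .ev (trP Φ t)
  | .alw Φ, .t1111 => .alw (trP Φ .t1111)
  | .alw Φ, .t0111 => .ev (.alw (trP Φ .t0111))
  | .alw Φ, .t0011 => .alw (.ev (trP Φ .t0011))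
  | .alw Φ, .t0001 => .ev (trP Φ .t0001)
end


/-! ### Values of rPCTL* formulas lie in B4 -/

mutual
theorem sf_inB4 {AP S : Type} [Fintype S] (M : DTMC AP S)
    (μ : ∀ s : S, MeasureTheory.Measure (M.Path s)) :
    ∀ (φ : SF AP) (s : S), (SF.val M μ φ s).InB4
  | .atom p, s => by
      simp only [SF.val]; split
      · exact TV.top_inB4
      · exact TV.bot_inB4
  | .not φ, s => by
      simp only [SF.val]; split
      · exact TV.bot_inB4
      · exact TV.top_inB4
  | .and φ ψ, s => TV.inf_inB4 (sf_inB4 M μ φ s) (sf_inB4 M μ ψ s)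
  | .or φ ψ, s => TV.sup_inB4 (sf_inB4 M μ φ s) (sf_inB4 M μ ψ s)
  | .imp φ ψ, s => by
      simp only [SF.val]; split
      · exact TV.top_inB4
      · exact sf_inB4 M μ ψ s
  | .prob c l Φ, s => by
      simp only [SF.val]; exact B4.toTV_inB4 _

theorem pf_inB4 {AP S : Type} [Fintype S] (M : DTMC AP S)
    (μ : ∀ s : S, MeasureTheory.Measure (M.Path s)) :
    ∀ (Φ : PFm AP) (π : M.PathU), (PFm.val M μ Φ π).InB4
  | .state φ, π => by simp only [PFm.val]; exact sf_inB4 M μ φ (π.1 0)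
  | .not Φ, π => by
      simp only [PFm.val]; split
      · exact TV.bot_inB4
      · exact TV.top_inB4
  | .and Φ Ψ, π => TV.inf_inB4 (pf_inB4 M μ Φ π) (pf_inB4 M μ Ψ π)
  | .or Φ Ψ, π => TV.sup_inB4 (pf_inB4 M μ Φ π) (pf_inB4 M μ Ψ π)
  | .imp Φ Ψ, π => by
      simp only [PFm.val]; split
      · exact TV.top_inB4
      · exact pf_inB4 M μ Ψ π
  | .next Φ, π => by simp only [PFm.val]; exact pf_inB4 M μ Φ (π.suffix 1)
  | .ev Φ, π => by
      have h : ∀ n, (PFm.val M μ Φ (π.suffix n)).InB4 := fun n => pf_inB4 M μ Φ (π.suffix n)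
      simp only [PFm.val, TV.InB4]
      refine ⟨boolOf_le' ?_, boolOf_le' ?_, boolOf_le' ?_⟩
      · rintro ⟨n, hn⟩; exact ⟨n, bool_le_iff'.mp (h n).1 hn⟩
      · rintro ⟨n, hn⟩; exact ⟨n, bool_le_iff'.mp (h n).2.1 hn⟩
      · rintro ⟨n, hn⟩; exact ⟨n, bool_le_iff'.mp (h n).2.2 hn⟩
  | .alw Φ, π => by
      have h : ∀ n, (PFm.val M μ Φ (π.suffix n)).InB4 := fun n => pf_inB4 M μ Φ (π.suffix n)
      simp only [PFm.val, TV.InB4]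
      refine ⟨boolOf_le' ?_, boolOf_le' ?_, boolOf_le' ?_⟩
      · intro h1
        exact ⟨0, fun n _ => bool_le_iff'.mp (h n).1 (h1 n)⟩
      · rintro ⟨m, hm⟩ m'
        exact ⟨max m m', le_max_right _ _,
          bool_le_iff'.mp (h _).2.1 (hm _ (le_max_left _ _))⟩
      · intro h3
        obtain ⟨n, -, hn⟩ := h3 0
        exact ⟨n, bool_le_iff'.mp (h n).2.2 hn⟩
end


/-! ### Correctness of the translation -/

lemma trS_zero {AP : Type} (φ : SF AP) : trS φ .t0000 = φ.imp φ := by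
  cases φ <;> simp [trS]

lemma trP_zero {AP : Type} (Φ : PFm AP) : trP Φ .t0000 = Φ.imp Φ := by
  cases Φ <;> simp [trP]

mutual
theorem trS_correct {AP S : Type} [Fintype S] (M : DTMC AP S)
    (μ : ∀ s : S, MeasureTheory.Measure (M.Path s)) :
    ∀ (φ : SF AP) (t : B4) (s : S),
      (SF.val M μ φ s).ge4 t ↔ SF.Sat M μ (trS φ t) s
  | .atom p, t, s => by
      cases t <;> by_cases h : p ∈ M.label s <;>
        simp [trS, SF.val, SF.Sat, TV.ge4, TV.top, TV.bot, h]
  | .not φ, t, s => by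
      have h1 := trS_correct M μ φ .t1111 s
      have htop := TV.eq_top_iff_ge4 (sf_inB4 M μ φ s)
      cases t
      case t0000 => simp [trS_zero, TV.ge4, SF.Sat]
      all_goals (
        simp only [trS, SF.Sat, SF.val, ← h1, ← htop]
        by_cases h : SF.val M μ φ s = TV.top
        · simp [h, TV.ge4, TV.bot]
        · rw [if_neg h]; simp [TV.ge4, TV.top]; exact h)
  | .and φ ψ, t, s => by
      have h1 := trS_correct M μ φ t s
      have h2 := trS_correct M μ ψ t s
      cases t
      case t0000 => simp [trS_zero, TV.ge4, SF.Sat]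
      all_goals (
        simp only [SF.val, TV.ge4_inf, trS, SF.Sat]
        exact and_congr h1 h2)
  | .or φ ψ, t, s => by
      have h1 := trS_correct M μ φ t s
      have h2 := trS_correct M μ ψ t s
      cases t
      case t0000 => simp [trS_zero, TV.ge4, SF.Sat]
      all_goals (
        simp only [SF.val, TV.ge4_sup, trS, SF.Sat]
        exact or_congr h1 h2)
  | .imp φ ψ, t, s => by
      have hle : (SF.val M μ φ s ≤ SF.val M μ ψ s) ↔
          ((SF.Sat M μ (trS φ .t1111) s → SF.Sat M μ (trS ψ .t1111) s) ∧
           (SF.Sat M μ (trS φ .t0111) s → SF.Sat M μ (trS ψ .t0111) s) ∧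
           (SF.Sat M μ (trS φ .t0011) s → SF.Sat M μ (trS ψ .t0011) s) ∧
           (SF.Sat M μ (trS φ .t0001) s → SF.Sat M μ (trS ψ .t0001) s)) := by
        rw [TV.le_iff_ge4]
        exact and_congr
          (imp_congr (trS_correct M μ φ .t1111 s) (trS_correct M μ ψ .t1111 s))
          (and_congr
            (imp_congr (trS_correct M μ φ .t0111 s) (trS_correct M μ ψ .t0111 s))
            (and_congr
              (imp_congr (trS_correct M μ φ .t0011 s) (trS_correct M μ ψ .t0011 s))
              (imp_congr (trS_correct M μ φ .t0001 s) (trS_correct M μ ψ .t0001 s))))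
      have h2 := trS_correct M μ ψ t s
      cases t
      case t0000 => simp [trS_zero, TV.ge4, SF.Sat]
      all_goals (
        simp only [trS, SF.Sat, SF.val]
        rw [← hle, ← h2]
        by_cases h : SF.val M μ φ s ≤ SF.val M μ ψ s
        · simp [h, TV.ge4_top]
        · simp [h])
  | .prob c l Φ, t, s => by
      have key : ∀ b : B4,
          {π : M.Path s | (PFm.val M μ Φ π.toU).ge4 b} =
            {π : M.Path s | PFm.Sat M μ (trP Φ b) π.toU} :=
        fun b => Set.ext fun π => trP_correct M μ Φ b π.toU
      have hset : {b : B4 | PCmp.holds c (μ s {π | (PFm.val M μ Φ π.toU).ge4 b}) l.toENNReal} =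
          {b : B4 | PCmp.holds c (μ s {π | PFm.Sat M μ (trP Φ b) π.toU}) l.toENNReal} :=
        Set.ext fun b => by simp only [Set.mem_setOf_eq]; rw [key b]
      have hval : SF.val M μ (.prob c l Φ) s =
          (maxB4 {b : B4 |
            PCmp.holds c (μ s {π | PFm.Sat M μ (trP Φ b) π.toU}) l.toENNReal}).toTV := by
        simp only [SF.val]
        rw [hset]
      cases t
      case t0000 => simp [trS_zero, TV.ge4, SF.Sat]
      case t1111 =>
        rw [hval]; simp only [trS, SF.Sat]
        exact maxB4_ge4_1111 _
      case t0111 =>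
        rw [hval]; simp only [trS, SF.Sat]
        exact maxB4_ge4_0111 _
      case t0011 =>
        rw [hval]; simp only [trS, SF.Sat]
        exact maxB4_ge4_0011 _
      case t0001 =>
        rw [hval]; simp only [trS, SF.Sat]
        exact maxB4_ge4_0001 _

theorem trP_correct {AP S : Type} [Fintype S] (M : DTMC AP S)
    (μ : ∀ s : S, MeasureTheory.Measure (M.Path s)) :
    ∀ (Φ : PFm AP) (t : B4) (π : M.PathU),
      (PFm.val M μ Φ π).ge4 t ↔ PFm.Sat M μ (trP Φ t) π
  | .state φ, t, π => by
      cases t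
      case t0000 => simp [trP_zero, TV.ge4, PFm.Sat]
      all_goals (
        simp only [trP, PFm.val, PFm.Sat]
        exact trS_correct M μ φ _ (π.1 0))
  | .not Φ, t, π => by
      have h1 := trP_correct M μ Φ .t1111 π
      have htop := TV.eq_top_iff_ge4 (pf_inB4 M μ Φ π)
      cases t
      case t0000 => simp [trP_zero, TV.ge4, PFm.Sat]
      all_goals (
        simp only [trP, PFm.Sat, PFm.val, ← h1, ← htop]
        by_cases h : PFm.val M μ Φ π = TV.top
        · simp [h, TV.ge4, TV.bot]
        · rw [if_neg h]; simp [TV.ge4, TV.top]; exact h)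
  | .and Φ Ψ, t, π => by
      have h1 := trP_correct M μ Φ t π
      have h2 := trP_correct M μ Ψ t π
      cases t
      case t0000 => simp [trP_zero, TV.ge4, PFm.Sat]
      all_goals (
        simp only [PFm.val, TV.ge4_inf, trP, PFm.Sat]
        exact and_congr h1 h2)
  | .or Φ Ψ, t, π => by
      have h1 := trP_correct M μ Φ t π
      have h2 := trP_correct M μ Ψ t π
      cases t
      case t0000 => simp [trP_zero, TV.ge4, PFm.Sat]
      all_goals (
        simp only [PFm.val, TV.ge4_sup, trP, PFm.Sat]
        exact or_congr h1 h2)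
  | .imp Φ Ψ, t, π => by
      have hle : (PFm.val M μ Φ π ≤ PFm.val M μ Ψ π) ↔
          ((PFm.Sat M μ (trP Φ .t1111) π → PFm.Sat M μ (trP Ψ .t1111) π) ∧
           (PFm.Sat M μ (trP Φ .t0111) π → PFm.Sat M μ (trP Ψ .t0111) π) ∧
           (PFm.Sat M μ (trP Φ .t0011) π → PFm.Sat M μ (trP Ψ .t0011) π) ∧
           (PFm.Sat M μ (trP Φ .t0001) π → PFm.Sat M μ (trP Ψ .t0001) π)) := by
        rw [TV.le_iff_ge4]
        exact and_congr
          (imp_congr (trP_correct M μ Φ .t1111 π) (trP_correct M μ Ψ .t1111 π))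
          (and_congr
            (imp_congr (trP_correct M μ Φ .t0111 π) (trP_correct M μ Ψ .t0111 π))
            (and_congr
              (imp_congr (trP_correct M μ Φ .t0011 π) (trP_correct M μ Ψ .t0011 π))
              (imp_congr (trP_correct M μ Φ .t0001 π) (trP_correct M μ Ψ .t0001 π))))
      have h2 := trP_correct M μ Ψ t π
      cases t
      case t0000 => simp [trP_zero, TV.ge4, PFm.Sat]
      all_goals (
        simp only [trP, PFm.Sat, PFm.val]
        rw [← hle, ← h2]
        by_cases h : PFm.val M μ Φ π ≤ PFm.val M μ Ψ π
        · simp [h, TV.ge4_top]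
        · simp [h])
  | .next Φ, t, π => by
      cases t
      case t0000 => simp [trP_zero, TV.ge4, PFm.Sat]
      all_goals (
        simp only [trP, PFm.val, PFm.Sat]
        exact trP_correct M μ Φ _ (π.suffix 1))
  | .ev Φ, t, π => by
      cases t
      case t0000 => simp [trP_zero, TV.ge4, PFm.Sat]
      case t1111 =>
        simp only [trP, PFm.val, PFm.Sat, TV.ge4, boolOf_iff]
        exact exists_congr fun n => trP_correct M μ Φ .t1111 (π.suffix n)
      case t0111 =>
        simp only [trP, PFm.val, PFm.Sat, TV.ge4, boolOf_iff]
        exact exists_congr fun n => trP_correct M μ Φ .t0111 (π.suffix n)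
      case t0011 =>
        simp only [trP, PFm.val, PFm.Sat, TV.ge4, boolOf_iff]
        exact exists_congr fun n => trP_correct M μ Φ .t0011 (π.suffix n)
      case t0001 =>
        simp only [trP, PFm.val, PFm.Sat, TV.ge4, boolOf_iff]
        exact exists_congr fun n => trP_correct M μ Φ .t0001 (π.suffix n)
  | .alw Φ, t, π => by
      cases t
      case t0000 => simp [trP_zero, TV.ge4, PFm.Sat]
      case t1111 =>
        simp only [trP, PFm.val, PFm.Sat, TV.ge4, boolOf_iff]
        exact forall_congr' fun n => trP_correct M μ Φ .t1111 (π.suffix n)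
      case t0111 =>
        simp only [trP, PFm.val, PFm.Sat, TV.ge4, boolOf_iff, DTMC.PathU.suffix_suffix]
        constructor
        · rintro ⟨m, hm⟩
          exact ⟨m, fun n =>
            (trP_correct M μ Φ .t0111 (π.suffix (m + n))).mp (hm _ (Nat.le_add_right m n))⟩
        · rintro ⟨m, hm⟩
          refine ⟨m, fun n hn => ?_⟩
          obtain ⟨k, rfl⟩ := Nat.exists_eq_add_of_le hn
          exact (trP_correct M μ Φ .t0111 (π.suffix (m + k))).mpr (hm k)
      case t0011 =>
        simp only [trP, PFm.val, PFm.Sat, TV.ge4, boolOf_iff, DTMC.PathU.suffix_suffix]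
        constructor
        · intro h m
          obtain ⟨n, hmn, hb⟩ := h m
          obtain ⟨k, rfl⟩ := Nat.exists_eq_add_of_le hmn
          exact ⟨k, (trP_correct M μ Φ .t0011 (π.suffix (m + k))).mp hb⟩
        · intro h m
          obtain ⟨n, hn⟩ := h m
          exact ⟨m + n, Nat.le_add_right m n,
            (trP_correct M μ Φ .t0011 (π.suffix (m + n))).mpr hn⟩
      case t0001 =>
        simp only [trP, PFm.val, PFm.Sat, TV.ge4, boolOf_iff]
        exact exists_congr fun n => trP_correct M μ Φ .t0001 (π.suffix n)
end

/-- For every rPCTL* state formula `φ` and truth value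
`t ∈ B4` there is a PCTL*(◊,□) state formula `φ_t` with: for all DTMCs `M` and
states `s`, `V_M(s, φ) ⪰ t` iff `M, s ⊨ φ_t`. -/
theorem rpctlstar_to_pctlstar_state {AP : Type} (φ : SF AP) (t : B4) :
    ∃ φt : SF AP,
      ∀ (S : Type) [Fintype S] (M : DTMC AP S)
        (μ : ∀ s : S, MeasureTheory.Measure (M.Path s)),
        (∀ s : S, M.IsCylinderMeasure s (μ s)) →
          ∀ s : S, (SF.val M μ φ s).ge4 t ↔ SF.Sat M μ φt s := by
  exact ⟨trS φ t, fun S _ M μ _ s => trS_correct M μ φ t s⟩
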